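/- arXiv:2005.09799 — 2 statements merged into one kernel-verified Lean document; each statement's English description precedes it below -/
import Mathlib

section
/- Let Φ be a finite crystallographic root system with Weyl group W₀, longest element w₀, and quantum Bruhat graph Γ_Φ, and let σ be an automorphism of W₀ induced by a bijection of the simple roots Δ preserving the Cartan pairings. Then for every x ∈ W₀, ℓ_R(x w₀ σ(x)⁻¹) ≤ d_Γ(x, σ(x)w₀), where ℓ_R(w) is the minimal number of reflections s_β (β ∈ Φ⁺) whose product is w. -/
/-!
A path `x = x₀ → x₁ → ⋯ → xₙ = y` in the quantum Bruhat graph is labelled by reflections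
`t₁, …, tₙ` with `y = x t₁ ⋯ tₙ`, so `x y⁻¹ = (x tₙ x⁻¹) ⋯ (x t₁ x⁻¹)` is a product of
`d_Γ(x, y)` reflections. For `y = σ(x) w₀` this is `x w₀ σ(x)⁻¹` as soon as `w₀² = 1`.

That the longest element is an involution comes from Tits' sign representation of `W` on
`W × {±1}`. Its sign cocycle `η(w, t)` is `-1` exactly when `t` is a right inversion of `w`
(this is the strong exchange condition), every reflection is a right inversion of `w₀`, and
hence `η(w₀², t) = η(w₀, t) η(w₀, w₀ t w₀⁻¹) = 1` for every reflection `t`, so `w₀²` has no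
descent.
-/

/-- The Bruhat order on a Coxeter group: `u ≤ v` iff one can pass from `u` to `v` by
successively multiplying on the right by reflections, increasing the length at each step. -/
def BruhatLE {B W : Type*} [Group W] {M : CoxeterMatrix B} (cs : CoxeterSystem M W)
    (u v : W) : Prop :=
  Relation.ReflTransGen
    (fun a b => ∃ t : W, cs.IsReflection t ∧ b = a * t ∧ cs.length a < cs.length b) u v

/-- The reflection length `ℓ_R(w)` of `w`: the minimal number of reflections whose
product is `w`. -/
noncomputable def reflLength {B W : Type*} [Group W] {M : CoxeterMatrix B}
    (cs : CoxeterSystem M W) (w : W) : ℕ :=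
  sInf {n | ∃ l : List W, (∀ t ∈ l, cs.IsReflection t) ∧ l.length = n ∧ l.prod = w}

/-- The reflection length of a subset: `ℓ_R(O) = min {ℓ_R(w) : w ∈ O}`. -/
noncomputable def reflLengthSet {B W : Type*} [Group W] {M : CoxeterMatrix B}
    (cs : CoxeterSystem M W) (O : Set W) : ℕ :=
  sInf (reflLength cs '' O)

/-- Data of (the positive roots and coroots of) a finite crystallographic root system
underlying its Weyl group `W`, presented as a Coxeter system `cs`.  The positive roots
`α ∈ Φ⁺` are identified with the corresponding reflections `t = s_α` of `W` (for a
crystallographic root system this correspondence is bijective, and the reflections of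
the Coxeter system are exactly the reflections `s_β`, `β ∈ Φ⁺`); `coroot t` is the
coroot `α^∨` of the positive root `α` with `s_α = t`, living in the coweight lattice
`X`, and `pairRho` is the pairing `⟨·, ρ⟩` with the half-sum `ρ` of the positive roots.
For a simple root `α` one has `⟨α^∨, ρ⟩ = 1`, and `⟨α^∨, ρ⟩ > 0` for every positive
root `α`. -/
structure QBGSetup (B W X : Type*) [Group W] [AddCommGroup X] (M : CoxeterMatrix B) where
  cs : CoxeterSystem M W
  coroot : W → X
  pairRho : X →+ ℤ
  pairRho_simple : ∀ i : B, pairRho (coroot (cs.simple i)) = 1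
  pairRho_pos : ∀ t : W, cs.IsReflection t → 0 < pairRho (coroot t)

namespace QBGSetup

variable {B W X : Type*} [Group W] [AddCommGroup X] {M : CoxeterMatrix B}

/-- `Q.EdgeStep w t` says that there is an edge `w → w * t` in the quantum Bruhat graph
`Γ_Φ`: `t` is a reflection `s_α` (`α ∈ Φ⁺`) and either `ℓ(w s_α) = ℓ(w) + 1` (an upward
edge) or `ℓ(w s_α) = ℓ(w) - ⟨α^∨, 2ρ⟩ + 1` (a downward edge). -/
def EdgeStep (Q : QBGSetup B W X M) (w t : W) : Prop :=
  Q.cs.IsReflection t ∧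
    (Q.cs.length (w * t) = Q.cs.length w + 1 ∨
      (Q.cs.length (w * t) : ℤ) = (Q.cs.length w : ℤ) - 2 * Q.pairRho (Q.coroot t) + 1)

/-- `Q.IsPath x y ts` says that the list of reflections `ts` describes a directed path
from `x` to `y` in the quantum Bruhat graph `Γ_Φ`. -/
def IsPath (Q : QBGSetup B W X M) : W → W → List W → Prop
  | x, y, [] => x = y
  | x, y, t :: ts => Q.EdgeStep x t ∧ Q.IsPath (x * t) y ts

/-- The weight of the edge `w → w * t`: `0` if it is an upward edge, and the coroot
`α^∨` (where `t = s_α`) if it is a downward edge. -/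
noncomputable def stepWeight (Q : QBGSetup B W X M) (w t : W) : X :=
  if Q.cs.length (w * t) = Q.cs.length w + 1 then 0 else Q.coroot t

/-- The weight of a directed path: the sum of the weights of its edges. -/
noncomputable def pathWeight (Q : QBGSetup B W X M) : W → List W → X
  | _, [] => 0
  | w, t :: ts => Q.stepWeight w t + Q.pathWeight (w * t) ts

/-- `d_Γ(x, y)`: the minimal number of edges in a directed path from `x` to `y` in the
quantum Bruhat graph `Γ_Φ`. -/
noncomputable def dist (Q : QBGSetup B W X M) (x y : W) : ℕ :=
  sInf {n | ∃ ts : List W, Q.IsPath x y ts ∧ ts.length = n}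

end QBGSetup

namespace CoxeterSystem

open List

variable {B W : Type*} [Group W] {M : CoxeterMatrix B} (cs : CoxeterSystem M W)

local prefix:100 "s" => cs.simple
local prefix:100 "π" => cs.wordProd
local prefix:100 "ℓ" => cs.length
local prefix:100 "ris" => cs.rightInvSeq
local prefix:100 "lis" => cs.leftInvSeq

theorem prod_map_alternatingWord_two_mul {G : Type*} [Monoid G] (g : B → G) (i i' : B) (n : ℕ) :
    ((alternatingWord i i' (2 * n)).map g).prod = (g i * g i') ^ n := by
  induction n with
  | zero => simp [alternatingWord]
  | succ n ih =>
    rw [Nat.mul_succ, alternatingWord_succ', alternatingWord_succ']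
    simp [ih, pow_succ', mul_assoc, parity_simps]

theorem reverse_alternatingWord_two_mul (i i' : B) (n : ℕ) :
    (alternatingWord i i' (2 * n)).reverse = alternatingWord i' i (2 * n) := by
  induction n with
  | zero => rfl
  | succ n ih =>
    conv_lhs => rw [Nat.mul_succ, alternatingWord_succ', alternatingWord_succ']
    conv_rhs => rw [Nat.mul_succ, alternatingWord_succ, alternatingWord_succ]
    simp [ih, parity_simps]

theorem even_count_rightInvSeq_alternatingWord [DecidableEq W] (i i' : B) (t : W) :
    Even ((ris (alternatingWord i i' (2 * M i i'))).count t) := by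
  rw [← reverse_alternatingWord_two_mul i' i, rightInvSeq_reverse, count_reverse]
  set m := M i i'
  set L := lis (alternatingWord i' i (2 * m))
  have hL : ∀ k (hk : k < L.length), L[k] = s i' * (s i * s i') ^ k := by
    intro k hk
    simp only [L, length_leftInvSeq, length_alternatingWord] at hk
    rw [getElem_leftInvSeq_alternatingWord cs i' i m k hk, prod_alternatingWord_eq_mul_pow]
    simp [Nat.mul_add_div, parity_simps]
  have hperiod : L.drop m = L.take m := by
    apply ext_getElem
    · simp [L]; omega
    · intro k h₁ h₂
      rw [getElem_drop, getElem_take, hL, hL, pow_add, cs.simple_mul_simple_pow, one_mul]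
  rw [← take_append_drop m L, count_append, hperiod]
  exact ⟨_, rfl⟩

theorem simple_mul_mul_simple_eq_simple_iff (i : B) (t : W) : s i * t * s i = s i ↔ t = s i := by
  constructor
  · intro h
    simpa [mul_assoc] using congrArg (fun u => s i * u * s i) h
  · rintro rfl
    simp

section SignRepresentation

open scoped Classical

noncomputable def signPerm (i : B) : Equiv.Perm (W × ℤˣ) :=
  Function.Involutive.toPerm (fun p => (s i * p.1 * s i, if p.1 = s i then -p.2 else p.2))
    (by
      rintro ⟨t, ε⟩
      by_cases h : t = s i
      · simp [h]
      · have h' : s i * t * s i ≠ s i := (simple_mul_mul_simple_eq_simple_iff cs i t).not.mpr h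
        simp only [if_neg h, if_neg h']
        simp [mul_assoc])

theorem signPerm_apply (i : B) (t : W) (ε : ℤˣ) :
    cs.signPerm i (t, ε) = (s i * t * s i, if t = s i then -ε else ε) := rfl

theorem prod_map_signPerm_apply (ω : List B) (t : W) (ε : ℤˣ) :
    (ω.map cs.signPerm).prod (t, ε) =
      (π ω * t * (π ω)⁻¹, ε * (-1) ^ (ris ω).count t) := by
  induction ω with
  | nil => simp
  | cons i ω ih =>
    rw [map_cons, prod_cons, Equiv.Perm.mul_apply, ih, signPerm_apply, rightInvSeq, count_cons]
    by_cases h : (π ω)⁻¹ * s i * π ω = t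
    · subst h
      simp [wordProd_cons, mul_assoc, pow_succ]
    · have h' : π ω * t * (π ω)⁻¹ ≠ s i := by
        contrapose h
        rw [← h]
        group
      simp only [if_neg h', beq_iff_eq, if_neg h, add_zero, Prod.mk.injEq, and_true]
      simp [wordProd_cons, mul_assoc]

theorem signPerm_isLiftable : M.IsLiftable cs.signPerm := by
  intro i i'
  rw [← prod_map_alternatingWord_two_mul]
  ext ⟨t, ε⟩ : 1
  rw [prod_map_signPerm_apply, wordProd, prod_map_alternatingWord_two_mul,
    cs.simple_mul_simple_pow, (even_count_rightInvSeq_alternatingWord cs i i' t).neg_one_pow]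
  simp

noncomputable def signRep : W →* Equiv.Perm (W × ℤˣ) :=
  cs.lift ⟨cs.signPerm, cs.signPerm_isLiftable⟩

theorem signRep_wordProd_apply (ω : List B) (t : W) (ε : ℤˣ) :
    cs.signRep (π ω) (t, ε) = (π ω * t * (π ω)⁻¹, ε * (-1) ^ (ris ω).count t) := by
  rw [← prod_map_signPerm_apply, wordProd, map_list_prod, map_map]
  congr
  ext i : 1
  exact cs.lift_apply_simple _ i

theorem exists_signRep_apply (w t : W) :
    ∃ η : ℤˣ, ∀ ε, cs.signRep w (t, ε) = (w * t * w⁻¹, ε * η) := by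
  obtain ⟨ω, rfl⟩ := cs.wordProd_surjective w
  exact ⟨_, cs.signRep_wordProd_apply ω t⟩

noncomputable def invSign (w t : W) : ℤˣ := (cs.signRep w (t, 1)).2

theorem signRep_apply (w t : W) (ε : ℤˣ) :
    cs.signRep w (t, ε) = (w * t * w⁻¹, ε * cs.invSign w t) := by
  obtain ⟨η, hη⟩ := cs.exists_signRep_apply w t
  simp [invSign, hη]

theorem invSign_wordProd (ω : List B) (t : W) :
    cs.invSign (π ω) t = (-1) ^ (ris ω).count t := by
  simp [invSign, signRep_wordProd_apply]

theorem invSign_mul (u v t : W) :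
    cs.invSign (u * v) t = cs.invSign v t * cs.invSign u (v * t * v⁻¹) := by
  rw [invSign, map_mul, Equiv.Perm.mul_apply, signRep_apply, signRep_apply, one_mul]

theorem invSign_one (t : W) : cs.invSign 1 t = 1 := by
  simp [invSign]

theorem invSign_simple_self (i : B) : cs.invSign (s i) (s i) = -1 := by
  simpa using cs.invSign_wordProd [i] (s i)

theorem invSign_inv_conj (u t : W) : cs.invSign u⁻¹ (u * t * u⁻¹) = cs.invSign u t := by
  have h := cs.invSign_mul u⁻¹ u t
  rw [inv_mul_cancel, invSign_one] at h
  rw [← Int.units_inv_eq_self (cs.invSign u t), eq_inv_iff_mul_eq_one, mul_comm, ← h]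

theorem IsReflection.invSign_self {t : W} (ht : cs.IsReflection t) : cs.invSign t t = -1 := by
  obtain ⟨u, i, rfl⟩ := ht
  -- the cocycle splits `η(u s u⁻¹, u s u⁻¹)` as `η(u⁻¹, u s u⁻¹) η(s, s) η(u, s)`,
  -- and the outer factors cancel
  have hconj : u⁻¹ * (u * s i * u⁻¹) * u⁻¹⁻¹ = s i := by group
  have hsimple : s i * s i * (s i)⁻¹ = s i := by group
  rw [invSign_mul, hconj, invSign_mul, hsimple, invSign_simple_self, invSign_inv_conj]
  rw [neg_one_mul, mul_neg, Int.units_mul_self]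

theorem isRightInversion_of_invSign_eq_neg_one {w t : W} (h : cs.invSign w t = -1) :
    cs.IsRightInversion w t := by
  obtain ⟨ω, hω, rfl⟩ := cs.exists_isReduced w
  rw [invSign_wordProd] at h
  have hcount : (ris ω).count t ≠ 0 := by
    rintro h0
    rw [h0, pow_zero] at h
    exact absurd h (by decide)
  exact cs.isRightInversion_of_mem_rightInvSeq hω (count_pos_iff.mp (Nat.pos_of_ne_zero hcount))

theorem invSign_eq_neg_one_iff {w t : W} : cs.invSign w t = -1 ↔ cs.IsRightInversion w t := by
  refine ⟨cs.isRightInversion_of_invSign_eq_neg_one, fun ⟨ht, hlt⟩ => ?_⟩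
  -- otherwise `w * t` flips `t`, so `(w * t) * t = w` would be shorter than `w * t`
  by_contra hne
  have hflip : cs.invSign (w * t) t = -1 := by
    rw [invSign_mul, ht.invSign_self, mul_inv_cancel_right,
      (Int.units_eq_one_or _).resolve_right hne, mul_one]
  have := (cs.isRightInversion_of_invSign_eq_neg_one hflip).2
  rw [mul_assoc, ht.mul_self, mul_one] at this
  omega

theorem mul_self_eq_one_of_forall_length_le {w₀ : W} (hw₀ : ∀ w, ℓ w ≤ ℓ w₀) : w₀ * w₀ = 1 := by
  have hinv : ∀ t, cs.IsReflection t → cs.invSign w₀ t = -1 := fun t ht =>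
    cs.invSign_eq_neg_one_iff.mpr ⟨ht, lt_of_le_of_ne (hw₀ _) (ht.length_mul_left_ne w₀)⟩
  by_contra hne
  obtain ⟨i, hi⟩ := cs.exists_rightDescent_of_ne_one hne
  have hsi := cs.isReflection_simple i
  have := cs.invSign_eq_neg_one_iff.mpr ((cs.isRightInversion_simple_iff_isRightDescent _ i).mpr hi)
  rw [invSign_mul, hinv _ hsi, hinv _ (hsi.conj w₀)] at this
  exact absurd this (by decide)

end SignRepresentation

end CoxeterSystem

theorem reflLength_prod_le_length {B W : Type*} [Group W] {M : CoxeterMatrix B}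
    (cs : CoxeterSystem M W) {l : List W} (hl : ∀ t ∈ l, cs.IsReflection t) :
    reflLength cs l.prod ≤ l.length :=
  Nat.sInf_le ⟨l, hl, rfl, rfl⟩

theorem reflLength_mul_inv_le_length {B W : Type*} [Group W] {M : CoxeterMatrix B}
    (cs : CoxeterSystem M W) {x y : W} {l : List W} (hl : ∀ t ∈ l, cs.IsReflection t)
    (hxy : x * l.prod = y) : reflLength cs (x * y⁻¹) ≤ l.length := by
  have hinv : l.reverse.prod = l.prod⁻¹ := by
    rw [List.prod_inv_reverse, List.map_congr_left fun t ht => (hl t ht).inv, List.map_id']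
  have hprod : x * y⁻¹ = (l.reverse.map (MulAut.conj x)).prod := by
    rw [← map_list_prod, hinv, ← hxy, MulAut.conj_apply]
    group
  rw [hprod, ← List.length_reverse, ← List.length_map (MulAut.conj x)]
  refine reflLength_prod_le_length cs fun t ht => ?_
  obtain ⟨u, hu, rfl⟩ := List.mem_map.mp ht
  exact (hl u (List.mem_reverse.mp hu)).conj x

namespace QBGSetup

variable {B W X : Type*} [Group W] [AddCommGroup X] {M : CoxeterMatrix B} {Q : QBGSetup B W X M}

theorem IsPath.isReflection : ∀ {x y : W} {ts : List W}, Q.IsPath x y ts →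
    ∀ t ∈ ts, Q.cs.IsReflection t
  | _, _, [], _ => by simp
  | _, _, _ :: _, ⟨hedge, hpath⟩ => by
    simpa [hedge.1] using hpath.isReflection

theorem IsPath.mul_prod : ∀ {x y : W} {ts : List W}, Q.IsPath x y ts → x * ts.prod = y
  | _, _, [], h => by rw [List.prod_nil, mul_one]; exact h
  | _, _, _ :: _, ⟨_, hpath⟩ => by
    rw [List.prod_cons, ← mul_assoc]
    exact hpath.mul_prod

theorem reflLength_mul_inv_le_dist {x y : W} (hxy : ∃ ts, Q.IsPath x y ts) :
    reflLength Q.cs (x * y⁻¹) ≤ Q.dist x y := by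
  obtain ⟨ts, hts⟩ := hxy
  obtain ⟨ts, hpath, hlen⟩ :=
    Nat.sInf_mem (s := {n | ∃ ts : List W, Q.IsPath x y ts ∧ ts.length = n}) ⟨_, ts, hts, rfl⟩
  rw [dist, ← hlen]
  exact reflLength_mul_inv_le_length Q.cs hpath.isReflection hpath.mul_prod

end QBGSetup

theorem statement4_general {B W X : Type*} [Group W] [AddCommGroup X]
    {M : CoxeterMatrix B} (Q : QBGSetup B W X M)
    (w₀ : W) (hw₀ : ∀ w, Q.cs.length w ≤ Q.cs.length w₀)
    (σ : W ≃* W)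
    (hconn : ∀ x y : W, ∃ ts : List W, Q.IsPath x y ts)
    (x : W) :
    reflLength Q.cs (x * w₀ * (σ x)⁻¹) ≤ Q.dist x (σ x * w₀) := by
  have hw₀inv : w₀⁻¹ = w₀ :=
    inv_eq_of_mul_eq_one_right (Q.cs.mul_self_eq_one_of_forall_length_le hw₀)
  calc reflLength Q.cs (x * w₀ * (σ x)⁻¹)
      = reflLength Q.cs (x * (σ x * w₀)⁻¹) := by rw [mul_inv_rev, hw₀inv, mul_assoc]
    _ ≤ Q.dist x (σ x * w₀) := Q.reflLength_mul_inv_le_dist (hconn x _)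

/-- Let `Φ` be a finite crystallographic root system with Weyl group `W₀`, longest
element `w₀`, and quantum Bruhat graph `Γ_Φ`, and let `σ` be an automorphism of `W₀`
induced by a bijection `π` of the simple roots preserving the Cartan pairings.  Then for
every `x ∈ W₀`, `ℓ_R(x w₀ σ(x)⁻¹) ≤ d_Γ(x, σ(x) w₀)`. -/
theorem statement4 {B W X : Type*} [Group W] [AddCommGroup X] [Finite W]
    {M : CoxeterMatrix B} (Q : QBGSetup B W X M)
    (w₀ : W) (hw₀ : ∀ w, Q.cs.length w ≤ Q.cs.length w₀)
    (σ : W ≃* W) (π : B ≃ B) (hσ : ∀ i : B, σ (Q.cs.simple i) = Q.cs.simple (π i))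
    (hσpair : ∀ t : W, Q.cs.IsReflection t →
      Q.pairRho (Q.coroot (σ t)) = Q.pairRho (Q.coroot t))
    (hconn : ∀ x y : W, ∃ ts : List W, Q.IsPath x y ts)
    (x : W) :
    reflLength Q.cs (x * w₀ * (σ x)⁻¹) ≤ Q.dist x (σ x * w₀) :=
  statement4_general Q w₀ hw₀ σ hconn x
end

section
/- Let k ≥ 1 and let (W, {s₁, s₂}) be the finite dihedral Coxeter system of type I₂(2k), with longest element w₀, and let σ be the automorphism of W exchanging s₁ and s₂. Let O = {x w₀ σ(x)⁻¹ : x ∈ W}. Then the identity element lies in O, and max{ℓ(x) : x ∈ W, x ≤ σ(x)w₀} = k, where ≤ is the Bruhat order; in particular ℓ(w₀) − 2·max{ℓ(x) : x ≤ σ(x)w₀} = 0 = ℓ_R(O). -/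
/-!
In a dihedral Coxeter group every element is the product of an alternating word of length
`ℓ(w)`, and an element of maximal length `2k` is given by the alternating word of length `2k`
beginning with either generator. Splitting that word after its first `ℓ(u)` letters gives
`ℓ(u w₀) ≤ 2k - ℓ(u)`; since `σ` preserves length and the Bruhat order increases it,
`x ≤ σ(x) w₀` forces `ℓ(x) ≤ k`. Conversely the two halves of the word for `w₀` show
`w₀ = σ(x)⁻¹ x = x⁻¹ σ(x)` for `x` alternating of length `k`, so `σ(x) w₀ = x` and
`x w₀ σ(x)⁻¹ = 1`, whence `ℓ_R(O) = 0`.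
-/

open List

namespace CoxeterSystem

variable {B : Type*}

theorem map_alternatingWord {B' : Type*} (f : B → B') (i i' : B) (m : ℕ) :
    (alternatingWord i i' m).map f = alternatingWord (f i) (f i') m := by
  induction m generalizing i i' with
  | zero => rfl
  | succ m ih => rw [alternatingWord_succ, map_concat, ih, alternatingWord_succ]

theorem exists_alternatingWord_add (i i' : B) (m n : ℕ) :
    ∃ a b : B, alternatingWord i i' (m + n) = alternatingWord a b m ++ alternatingWord i i' n := by
  induction n generalizing i i' with
  | zero => exact ⟨i, i', by simp [alternatingWord]⟩
  | succ n ih =>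
    obtain ⟨a, b, h⟩ := ih i' i
    exact ⟨a, b, by rw [← add_assoc, alternatingWord_succ, h, alternatingWord_succ, concat_eq_append,
      concat_eq_append, append_assoc]⟩

theorem alternatingWord_two_mul (i i' : B) (n : ℕ) :
    alternatingWord i i' (2 * n) = (alternatingWord i' i n).reverse ++ alternatingWord i i' n := by
  rw [two_mul]
  induction n generalizing i i' with
  | zero => rfl
  | succ n ih =>
    have hodd : ¬Even (n + n + 1) := by simp [Nat.even_add_one]
    rw [show n + 1 + (n + 1) = n + n + 1 + 1 by omega, alternatingWord_succ', if_neg hodd,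
      alternatingWord_succ, ih, alternatingWord_succ, alternatingWord_succ]
    simp

variable {W W' : Type*} [Group W] [Group W'] {M : CoxeterMatrix B} (cs : CoxeterSystem M W)
  {B' : Type*} {M' : CoxeterMatrix B'} (cs' : CoxeterSystem M' W')

theorem map_wordProd (f : W →* W') (g : B → B') (hf : ∀ i, f (cs.simple i) = cs'.simple (g i))
    (ω : List B) : f (cs.wordProd ω) = cs'.wordProd (ω.map g) := by
  simp [wordProd, map_list_prod, Function.comp_def, hf]

theorem length_map_le (f : W →* W') (g : B → B') (hf : ∀ i, f (cs.simple i) = cs'.simple (g i))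
    (w : W) : cs'.length (f w) ≤ cs.length w := by
  obtain ⟨ω, hω, rfl⟩ := cs.exists_isReduced w
  calc cs'.length (f (cs.wordProd ω)) ≤ (ω.map g).length := by
        rw [map_wordProd cs cs' f g hf]; exact cs'.length_wordProd_le _
    _ = cs.length (cs.wordProd ω) := by rw [length_map, hω.eq]

theorem length_map_eq (σ : W ≃* W) (g : Equiv.Perm B)
    (hσ : ∀ i, σ (cs.simple i) = cs.simple (g i)) (w : W) : cs.length (σ w) = cs.length w := by
  refine le_antisymm (length_map_le cs cs σ.toMonoidHom g hσ w) ?_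
  have hσ' : ∀ i, σ.symm (cs.simple i) = cs.simple (g.symm i) := fun i => by
    rw [MulEquiv.symm_apply_eq, hσ, Equiv.apply_symm_apply]
  simpa using length_map_le cs cs σ.symm.toMonoidHom g.symm hσ' (σ w)

end CoxeterSystem

theorem CoxeterMatrix.apply_of_ne_fin_two (M : CoxeterMatrix (Fin 2)) {i i' : Fin 2} (h : i ≠ i') :
    M i i' = M 0 1 := by
  rcases (by omega : (i = 0 ∧ i' = 1) ∨ (i = 1 ∧ i' = 0)) with ⟨rfl, rfl⟩ | ⟨rfl, rfl⟩
  · rfl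
  · exact M.symmetric 1 0

namespace CoxeterSystem

variable {W : Type*} [Group W] {M : CoxeterMatrix (Fin 2)} (cs : CoxeterSystem M W)

theorem exists_wordProd_alternatingWord_eq (ω : List (Fin 2)) :
    ∃ i i' n, i ≠ i' ∧ n ≤ ω.length ∧ cs.wordProd (alternatingWord i i' n) = cs.wordProd ω := by
  induction ω using List.reverseRecOn with
  | nil => exact ⟨0, 1, 0, by decide, le_rfl, rfl⟩
  | append_singleton ω a ih =>
    obtain ⟨i, i', n, hii', hn, hω⟩ := ih
    rw [length_append, length_singleton, wordProd_append, ← hω, wordProd_singleton]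
    rcases n with _ | m
    · exact ⟨a + 1, a, 1, by omega, by omega, by simp [alternatingWord]⟩
    rw [alternatingWord_succ, wordProd_concat]
    by_cases ha : a = i'
    · exact ⟨i', i, m, hii'.symm, by omega, by rw [ha, cs.simple_mul_simple_cancel_right]⟩
    · obtain rfl : a = i := by omega
      exact ⟨i', a, m + 2, hii'.symm, by omega, by rw [alternatingWord_succ, wordProd_concat,
        alternatingWord_succ, wordProd_concat]⟩

theorem exists_eq_wordProd_alternatingWord (w : W) :
    ∃ i i', i ≠ i' ∧ w = cs.wordProd (alternatingWord i i' (cs.length w)) := by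
  obtain ⟨ω, hω, rfl⟩ := cs.exists_isReduced w
  obtain ⟨i, i', n, hii', hn, heq⟩ := cs.exists_wordProd_alternatingWord_eq ω
  have hlen : cs.length (cs.wordProd ω) ≤ n := by
    simpa [heq] using cs.length_wordProd_le (alternatingWord i i' n)
  obtain rfl : n = cs.length (cs.wordProd ω) := le_antisymm (hω.eq ▸ hn) hlen
  exact ⟨i, i', hii', heq.symm⟩

theorem length_le_of_ne_zero (hM : M 0 1 ≠ 0) (w : W) : cs.length w ≤ M 0 1 := by
  obtain ⟨i, i', hii', hw⟩ := cs.exists_eq_wordProd_alternatingWord w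
  have hred : cs.IsReduced (alternatingWord i i' (cs.length w)) := by
    rw [IsReduced, ← hw, length_alternatingWord]
  rw [← M.apply_of_ne_fin_two hii'] at hM ⊢
  exact not_lt.mp fun h => cs.not_isReduced_alternatingWord i i' hM h hred

theorem eq_wordProd_alternatingWord_of_length_eq {v : W} (hv : cs.length v = M 0 1)
    {i i' : Fin 2} (hii' : i ≠ i') : v = cs.wordProd (alternatingWord i i' (M 0 1)) := by
  obtain ⟨c, d, hcd, hc⟩ := cs.exists_eq_wordProd_alternatingWord v
  rw [hv] at hc
  rcases (by omega : (c = i ∧ d = i') ∨ (c = i' ∧ d = i)) with ⟨rfl, rfl⟩ | ⟨rfl, rfl⟩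
  · exact hc
  · rw [hc, ← M.apply_of_ne_fin_two hcd]
    nth_rw 2 [M.symmetric]
    exact cs.wordProd_braidWord_eq c d

theorem eq_inv_mul_of_length_eq {v : W} (hv : cs.length v = M 0 1) {n : ℕ} (hn : M 0 1 = 2 * n)
    {i i' : Fin 2} (hii' : i ≠ i') :
    v = (cs.wordProd (alternatingWord i' i n))⁻¹ * cs.wordProd (alternatingWord i i' n) := by
  rw [cs.eq_wordProd_alternatingWord_of_length_eq hv hii', hn, alternatingWord_two_mul,
    wordProd_append, wordProd_reverse]

theorem length_mul_add_length_le (hM : M 0 1 ≠ 0) {v : W} (hv : cs.length v = M 0 1) (u : W) :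
    cs.length (u * v) + cs.length u ≤ M 0 1 := by
  obtain ⟨i, i', hii', hu⟩ := cs.exists_eq_wordProd_alternatingWord u
  have hle := cs.length_le_of_ne_zero hM u
  obtain ⟨a, b, hsplit⟩ := exists_alternatingWord_add i i' (M 0 1 - cs.length u) (cs.length u)
  rw [Nat.sub_add_cancel hle] at hsplit
  have hvinv : v⁻¹ = cs.wordProd (alternatingWord i i' (M 0 1)) :=
    cs.eq_wordProd_alternatingWord_of_length_eq (by rw [length_inv, hv]) hii'
  have hprefix : (u * v)⁻¹ = cs.wordProd (alternatingWord a b (M 0 1 - cs.length u)) := by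
    rw [mul_inv_rev, hvinv, hsplit, wordProd_append, ← hu, mul_inv_cancel_right]
  have := cs.length_wordProd_le (alternatingWord a b (M 0 1 - cs.length u))
  rw [← hprefix, length_inv, length_alternatingWord] at this
  omega

end CoxeterSystem

theorem BruhatLE.length_le {B W : Type*} [Group W] {M : CoxeterMatrix B}
    {cs : CoxeterSystem M W} {u v : W} (h : BruhatLE cs u v) : cs.length u ≤ cs.length v := by
  induction h with
  | refl => exact le_rfl
  | tail _ hstep ih =>
    obtain ⟨_, _, _, hlt⟩ := hstep
    exact ih.trans hlt.le

section ReflectionLength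

variable {B W : Type*} [Group W] {M : CoxeterMatrix B} (cs : CoxeterSystem M W)

theorem reflLength_one : reflLength cs 1 = 0 :=
  Nat.sInf_eq_zero.mpr (Or.inl ⟨[], by simp, rfl, rfl⟩)

theorem reflLengthSet_eq_zero_of_one_mem {O : Set W} (h : 1 ∈ O) : reflLengthSet cs O = 0 :=
  Nat.sInf_eq_zero.mpr (Or.inl ⟨1, h, reflLength_one cs⟩)

end ReflectionLength

open CoxeterSystem in
theorem statement17_general {W : Type*} [Group W] (k : ℕ) (hk : 1 ≤ k)
    (cs : CoxeterSystem (CoxeterMatrix.I (2 * k - 2)) W)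
    (w₀ : W) (hlen : cs.length w₀ = 2 * k)
    (σ : W ≃* W) (hσ0 : σ (cs.simple 0) = cs.simple 1) (hσ1 : σ (cs.simple 1) = cs.simple 0) :
    (1 : W) ∈ {w | ∃ x : W, w = x * w₀ * (σ x)⁻¹} ∧
    sSup {n : ℕ | ∃ x : W, BruhatLE cs x (σ x * w₀) ∧ cs.length x = n} = k ∧
    (cs.length w₀ : ℤ) -
        2 * ((sSup {n : ℕ | ∃ x : W, BruhatLE cs x (σ x * w₀) ∧ cs.length x = n} : ℕ) : ℤ)
      = 0 ∧
    reflLengthSet cs {w | ∃ x : W, w = x * w₀ * (σ x)⁻¹} = 0 := by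
  have hM : CoxeterMatrix.I (2 * k - 2) 0 1 = 2 * k := by
    change 2 * k - 2 + 2 = 2 * k
    omega
  have hlen' : cs.length w₀ = CoxeterMatrix.I (2 * k - 2) 0 1 := hlen.trans hM.symm
  have hσ : ∀ i, σ (cs.simple i) = cs.simple (Equiv.swap 0 1 i) := by
    simp [Fin.forall_fin_two, hσ0, hσ1]
  set x := cs.wordProd (alternatingWord 1 0 k)
  have hσx : σ x = cs.wordProd (alternatingWord 0 1 k) := by
    simpa [map_alternatingWord] using map_wordProd cs cs σ.toMonoidHom _ hσ (alternatingWord 1 0 k)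
  have hw₀x : w₀ = (σ x)⁻¹ * x := hσx ▸ cs.eq_inv_mul_of_length_eq hlen' hM (by decide)
  have hw₀x' : w₀ = x⁻¹ * σ x := hσx ▸ cs.eq_inv_mul_of_length_eq hlen' hM (by decide)
  have hone : (1 : W) ∈ {w | ∃ x : W, w = x * w₀ * (σ x)⁻¹} :=
    ⟨x, by rw [hw₀x', mul_inv_cancel_left, mul_inv_cancel]⟩
  have hx : cs.length x = k := by
    have hx_le : cs.length x ≤ k := by
      simpa using cs.length_wordProd_le (alternatingWord 1 0 k)
    have hσx_le : cs.length (σ x) ≤ k := by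
      simpa [hσx] using cs.length_wordProd_le (alternatingWord 0 1 k)
    have h2k := cs.length_mul_le (σ x)⁻¹ x
    rw [← hw₀x, hlen, length_inv] at h2k
    omega
  have hmax : IsGreatest {n : ℕ | ∃ x : W, BruhatLE cs x (σ x * w₀) ∧ cs.length x = n} k := by
    refine ⟨⟨x, by rw [hw₀x, mul_inv_cancel_left]; exact .refl, hx⟩, ?_⟩
    rintro _ ⟨y, hy, rfl⟩
    have := cs.length_mul_add_length_le (by omega) hlen' (σ y)
    rw [length_map_eq cs σ _ hσ] at this
    have := hy.length_le
    omega
  rw [hmax.csSup_eq, hlen]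
  exact ⟨hone, rfl, by push_cast; ring, reflLengthSet_eq_zero_of_one_mem cs hone⟩

/-- Let `k ≥ 1` and let `(W, {s₁, s₂})` be the finite dihedral Coxeter system of type
`I₂(2k)` (the Coxeter matrix `CoxeterMatrix.I₂ₘ (2 * k - 2)` has off-diagonal entry
`2k`), with longest element `w₀` (of length `2k`), and let `σ` be the automorphism of
`W` exchanging `s₁` and `s₂`.  Let `O = {x w₀ σ(x)⁻¹ : x ∈ W}`.  Then `1 ∈ O` and
`max {ℓ(x) : x ≤ σ(x) w₀} = k`; in particular
`ℓ(w₀) - 2 · max {ℓ(x) : x ≤ σ(x) w₀} = 0 = ℓ_R(O)`. -/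
theorem statement17 {W : Type*} [Group W] (k : ℕ) (hk : 1 ≤ k)
    (cs : CoxeterSystem (CoxeterMatrix.I (2 * k - 2)) W)
    (w₀ : W) (hw₀ : ∀ w, cs.length w ≤ cs.length w₀) (hlen : cs.length w₀ = 2 * k)
    (σ : W ≃* W) (hσ0 : σ (cs.simple 0) = cs.simple 1) (hσ1 : σ (cs.simple 1) = cs.simple 0) :
    (1 : W) ∈ {w | ∃ x : W, w = x * w₀ * (σ x)⁻¹} ∧
    sSup {n : ℕ | ∃ x : W, BruhatLE cs x (σ x * w₀) ∧ cs.length x = n} = k ∧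
    (cs.length w₀ : ℤ) -
        2 * ((sSup {n : ℕ | ∃ x : W, BruhatLE cs x (σ x * w₀) ∧ cs.length x = n} : ℕ) : ℤ)
      = 0 ∧
    reflLengthSet cs {w | ∃ x : W, w = x * w₀ * (σ x)⁻¹} = 0 :=
  statement17_general k hk cs w₀ hlen σ hσ0 hσ1
end
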